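/- Let S be an infinite set of monic polynomials in R = 𝔽_q[x]. Then for every dimension m ∈ ℕ, every n ∈ ℕ, every N ∈ R with deg N = n, and every integer k with 0 ≤ k ≤ m_S(n), the uniform probability that a ∈ R_{<n}^m satisfies d_{N,S}(a) = k equals ν_m({α ∈ 𝔪^m : deg_{min,S}(α, q^{−n}) = k}). -/

import Mathlib

open Polynomial MeasureTheory
open scoped Classical ENNReal NNReal

/- Setting: `Fq` is a finite field with `q` elements (`q` a prime power),
`R = Fq[x]`, and `K_∞ = Fq((x⁻¹))` is realized as the field `LaurentSeries Fq`
of formal Laurent series in the variable `u = x⁻¹`. -/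

variable (Fq : Type) [Field Fq] [Fintype Fq] [DecidableEq Fq]

/-- `K_∞ = 𝔽_q((x⁻¹))`, realized as Laurent series in the variable `u = x⁻¹`. -/
abbrev Kinf := LaurentSeries Fq

/-- The embedding of `R = 𝔽_q[x]` into `K_∞`, sending `x` to `u⁻¹`. -/
noncomputable def emb : Polynomial Fq →+* Kinf Fq :=
  (Polynomial.aeval ((HahnSeries.single (-1 : ℤ) (1 : Fq)) : LaurentSeries Fq)).toRingHom

/-- `q`, as a nonnegative real number. -/
noncomputable def qc : NNReal := (Fintype.card Fq : NNReal)

/-- The absolute value `|α| = q^{-ord(α)}` on `K_∞` (so that `|f| = q^{deg f}` for a nonzero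
polynomial `f ∈ 𝔽_q[x]`, since `f(u⁻¹)` has order `-deg f` as a Laurent series in `u`). -/
noncomputable def fabs (α : Kinf Fq) : NNReal :=
  if α = 0 then 0 else (qc Fq) ^ (-(HahnSeries.order α))

/-- The sup norm `‖v‖ = max_i |v_i|` on `K_∞^m`. -/
noncomputable def vnorm {m : ℕ} (v : Fin m → Kinf Fq) : NNReal :=
  Finset.univ.sup fun i => fabs Fq (v i)

/-- The maximal ideal `𝔪 = {α ∈ K_∞ : |α| ≤ q⁻¹}`. -/
noncomputable def mfrak : Set (Kinf Fq) := {α | fabs Fq α ≤ (qc Fq)⁻¹}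

/-- `𝔪^m ⊆ K_∞^m`. -/
noncomputable def mfrakV (m : ℕ) : Set (Fin m → Kinf Fq) := {α | ∀ i, α i ∈ mfrak Fq}

/-- `(P, Q)` is a primitive vector of `R^{m+1}`, i.e. `gcd(P₁, …, P_m, Q) = 1`:
every common divisor is a unit. -/
def Primitive {m : ℕ} (P : Fin m → Polynomial Fq) (Q : Polynomial Fq) : Prop :=
  ∀ d : Polynomial Fq, d ∣ Q → (∀ i, d ∣ P i) → IsUnit d

/-- The point `P/Q ∈ K_∞^m` determined by `P ∈ R^m` and `Q ∈ R`. -/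
noncomputable def ratV {m : ℕ} (P : Fin m → Polynomial Fq) (Q : Polynomial Fq) :
    Fin m → Kinf Fq := fun i => emb Fq (P i) / emb Fq Q

/-- `deg_{min,S}(α, q^{-n})`: the least `d` such that there is `(P,Q) ∈ R̂^{m+1}` with
`Q ∈ S`, `deg Q = d`, `‖P‖ < |Q|` and `‖α - P/Q‖ < q^{-n}`. -/
noncomputable def degMin (S : Set (Polynomial Fq)) (m n : ℕ) (α : Fin m → Kinf Fq) : ℕ :=
  sInf {d : ℕ | ∃ (P : Fin m → Polynomial Fq) (Q : Polynomial Fq),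
    Q ∈ S ∧ Q.natDegree = d ∧ Primitive Fq P Q ∧
    vnorm Fq (ratV Fq P 1) < fabs Fq (emb Fq Q) ∧
    vnorm Fq (α - ratV Fq P Q) < (qc Fq) ^ (-(n : ℤ))}

/-- `m_S(n) = min {k ≥ n : S ∩ R_{=k} ≠ ∅}`. -/
noncomputable def mS (S : Set (Polynomial Fq)) (n : ℕ) : ℕ :=
  sInf {k : ℕ | n ≤ k ∧ ∃ Q ∈ S, Q.natDegree = k}

/-- `d_{N,S}(a) = deg_{min,S}(a/N, q^{-deg N})`. -/
noncomputable def dN (S : Set (Polynomial Fq)) (m : ℕ) (N : Polynomial Fq)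
    (a : Fin m → Polynomial Fq) : ℕ :=
  degMin Fq S m N.natDegree (ratV Fq a N)

/-- `R_{<n}^m`, the set of vectors of polynomials of degree `< n`. -/
def polyVecLT (m n : ℕ) : Set (Fin m → Polynomial Fq) :=
  {a | ∀ i, (a i).degree < (n : ℕ)}

/-- The `S`-Farey fractions of degree at most `k` in `K_∞^m` (the zero vector is
included, as the fraction `0/1`). -/
noncomputable def Farey (S : Set (Polynomial Fq)) (m k : ℕ) : Set (Fin m → Kinf Fq) :=
  {x | ∃ (P : Fin m → Polynomial Fq) (Q : Polynomial Fq), Q ∈ S ∧ Primitive Fq P Q ∧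
    vnorm Fq (ratV Fq P 1) < fabs Fq (emb Fq Q) ∧ Q.natDegree ≤ k ∧ x = ratV Fq P Q}

/-- The (closed) ball `B(v, r) = {u ∈ K_∞^m : ‖v - u‖ ≤ r}`. -/
noncomputable def ball {m : ℕ} (v : Fin m → Kinf Fq) (r : NNReal) : Set (Fin m → Kinf Fq) :=
  {u | vnorm Fq (v - u) ≤ r}

/-- `Q` is the (unique monic) `S`-minimal denominator for `(α, q^{-n})`, i.e.
`Q_{min,S}(α, q^{-n}) = Q`: `Q ∈ S`, `deg Q = deg_{min,S}(α, q^{-n})`, and there is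
`P ∈ R^m` with `(P,Q) ∈ R̂^{m+1}` and `‖α - P/Q‖ < q^{-n}`. -/
noncomputable def IsMinDenom (S : Set (Polynomial Fq)) (m n : ℕ) (α : Fin m → Kinf Fq)
    (Q : Polynomial Fq) : Prop :=
  Q ∈ S ∧ Q.natDegree = degMin Fq S m n α ∧
    ∃ P : Fin m → Polynomial Fq, Primitive Fq P Q ∧
      vnorm Fq (α - ratV Fq P Q) < (qc Fq) ^ (-(n : ℤ))

/-!
Both sides count the same balls. Since the absolute value is ultrametric, the condition
`‖α - P/Q‖ < q^{-n}` depends only on the closed ball of radius `q^{-(n+1)}` containing `α`, so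
`deg_{min,S}(·, q^{-n})` is constant on such balls. Multiplying by `N` and splitting a Laurent
series into its polynomial part and a part in `𝔪` shows that the balls of radius `q^{-(n+1)}`
around the points `a/N`, `a ∈ R_{<n}^m`, tile `𝔪^m`; they are disjoint because
`|a/N - b/N| ≥ q^{-n}` for `a ≠ b`. Each of them has measure `q^{-mn}`, as `𝔪^{j+1}` is the
disjoint union of `q` translates of `𝔪^{j+2}`.
-/

set_option linter.unusedSectionVars false

lemma one_lt_qc : 1 < qc Fq := by
  unfold qc
  exact_mod_cast Fintype.one_lt_card

lemma qc_pos : 0 < qc Fq := zero_lt_one.trans (one_lt_qc Fq)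

lemma qc_ne_zero : qc Fq ≠ 0 := (qc_pos Fq).ne'

section AbsoluteValue

variable {Fq}

@[simp]
lemma fabs_zero : fabs Fq 0 = 0 := if_pos rfl

lemma fabs_of_ne_zero {α : Kinf Fq} (h : α ≠ 0) : fabs Fq α = qc Fq ^ (-α.order) := if_neg h

lemma fabs_eq_zero {α : Kinf Fq} : fabs Fq α = 0 ↔ α = 0 := by
  refine ⟨fun h => ?_, by rintro rfl; exact fabs_zero⟩
  by_contra hα
  rw [fabs_of_ne_zero hα] at h
  exact zpow_ne_zero _ (qc_ne_zero Fq) h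

lemma fabs_le_zpow_iff {α : Kinf Fq} {j : ℤ} :
    fabs Fq α ≤ qc Fq ^ (-j) ↔ ∀ d < j, α.coeff d = 0 := by
  rcases eq_or_ne α 0 with rfl | h
  · simp
  rw [fabs_of_ne_zero h, zpow_le_zpow_iff_right₀ (one_lt_qc Fq), neg_le_neg_iff]
  refine ⟨fun hj d hd => HahnSeries.coeff_eq_zero_of_lt_order (hd.trans_le hj), fun hc => ?_⟩
  by_contra! hlt
  exact HahnSeries.coeff_order_eq_zero.not.mpr h (hc _ hlt)

lemma fabs_lt_zpow_iff {α : Kinf Fq} {j : ℤ} :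
    fabs Fq α < qc Fq ^ (-j) ↔ fabs Fq α ≤ qc Fq ^ (-(j + 1)) := by
  rcases eq_or_ne α 0 with rfl | h
  · simp [zpow_pos (qc_pos Fq)]
  rw [fabs_of_ne_zero h, zpow_lt_zpow_iff_right₀ (one_lt_qc Fq),
    zpow_le_zpow_iff_right₀ (one_lt_qc Fq)]
  omega

lemma fabs_neg (α : Kinf Fq) : fabs Fq (-α) = fabs Fq α := by
  simp only [fabs, HahnSeries.order_neg, neg_eq_zero]

lemma fabs_sub_comm (α β : Kinf Fq) : fabs Fq (α - β) = fabs Fq (β - α) := by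
  rw [← fabs_neg, neg_sub]

lemma fabs_add_le (α β : Kinf Fq) : fabs Fq (α + β) ≤ max (fabs Fq α) (fabs Fq β) := by
  rcases eq_or_ne (α + β) 0 with h | h
  · simp [h]
  rcases eq_or_ne α 0 with rfl | hα
  · simp
  rcases eq_or_ne β 0 with rfl | hβ
  · simp
  have hmin := HahnSeries.min_order_le_order_add h
  rw [fabs_of_ne_zero h, fabs_of_ne_zero hα, fabs_of_ne_zero hβ, le_max_iff,
    zpow_le_zpow_iff_right₀ (one_lt_qc Fq), zpow_le_zpow_iff_right₀ (one_lt_qc Fq)]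
  omega

lemma fabs_mul (α β : Kinf Fq) : fabs Fq (α * β) = fabs Fq α * fabs Fq β := by
  rcases eq_or_ne α 0 with rfl | hα
  · simp
  rcases eq_or_ne β 0 with rfl | hβ
  · simp
  rw [fabs_of_ne_zero (mul_ne_zero hα hβ), fabs_of_ne_zero hα, fabs_of_ne_zero hβ,
    HahnSeries.order_mul hα hβ, neg_add, zpow_add₀ (qc_ne_zero Fq)]

lemma fabs_div (α β : Kinf Fq) : fabs Fq (α / β) = fabs Fq α / fabs Fq β := by
  rcases eq_or_ne β 0 with rfl | hβ
  · simp
  rw [eq_div_iff (mt fabs_eq_zero.mp hβ), ← fabs_mul, div_mul_cancel₀ _ hβ]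

end AbsoluteValue

section Embedding

variable {Fq}

lemma emb_monomial (j : ℕ) (c : Fq) :
    emb Fq (monomial j c) = HahnSeries.single (-(j : ℤ)) c := by
  change aeval (HahnSeries.single (-1 : ℤ) (1 : Fq) : LaurentSeries Fq) (monomial j c) = _
  rw [aeval_monomial, HahnSeries.single_pow, show j • (-1 : ℤ) = -(j : ℤ) by simp,
    HahnSeries.algebraMap_apply', show algebraMap Fq (PowerSeries Fq) c = PowerSeries.C c from rfl,
    HahnSeries.ofPowerSeries_C, HahnSeries.C_apply, one_pow, HahnSeries.single_mul_single,
    zero_add, mul_one]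

lemma emb_coeff (f : Fq[X]) (d : ℤ) :
    (emb Fq f).coeff d = if d ≤ 0 then f.coeff (-d).toNat else 0 := by
  induction f using Polynomial.induction_on' with
  | add f g hf hg =>
    rw [map_add, HahnSeries.coeff_add, hf, hg, coeff_add]
    split_ifs <;> simp
  | monomial j c =>
    rw [emb_monomial, HahnSeries.coeff_single, coeff_monomial]
    split_ifs <;> first | rfl | omega

lemma emb_coeff_neg_natCast (f : Fq[X]) (j : ℕ) : (emb Fq f).coeff (-(j : ℤ)) = f.coeff j := by
  rw [emb_coeff, if_pos (by omega)]
  congr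
  omega

lemma emb_ne_zero {f : Fq[X]} (hf : f ≠ 0) : emb Fq f ≠ 0 := fun h => by
  have := emb_coeff_neg_natCast f f.natDegree
  rw [h, HahnSeries.coeff_zero] at this
  exact leadingCoeff_ne_zero.mpr hf this.symm

lemma order_emb {f : Fq[X]} (hf : f ≠ 0) : (emb Fq f).order = -(f.natDegree : ℤ) := by
  refine le_antisymm (HahnSeries.order_le_of_coeff_ne_zero ?_) ?_
  · rw [emb_coeff_neg_natCast]
    exact leadingCoeff_ne_zero.mpr hf
  · by_contra! hlt
    apply HahnSeries.coeff_order_eq_zero.not.mpr (emb_ne_zero hf)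
    rw [emb_coeff, if_pos (by omega)]
    exact coeff_eq_zero_of_natDegree_lt (by omega)

lemma fabs_emb {f : Fq[X]} (hf : f ≠ 0) : fabs Fq (emb Fq f) = qc Fq ^ (f.natDegree : ℤ) := by
  rw [fabs_of_ne_zero (emb_ne_zero hf), order_emb hf, neg_neg]

lemma one_le_fabs_emb {f : Fq[X]} (hf : f ≠ 0) : 1 ≤ fabs Fq (emb Fq f) := by
  rw [fabs_emb hf]
  exact one_le_zpow₀ (one_lt_qc Fq).le (by positivity)

lemma fabs_emb_lt_of_degree_lt {f : Fq[X]} {n : ℕ} (h : f.degree < n) :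
    fabs Fq (emb Fq f) < qc Fq ^ (n : ℤ) := by
  rcases eq_or_ne f 0 with rfl | hf
  · simpa using zpow_pos (qc_pos Fq) (n : ℤ)
  rw [fabs_emb hf, zpow_lt_zpow_iff_right₀ (one_lt_qc Fq)]
  exact_mod_cast (natDegree_lt_iff_degree_lt hf).mpr h

lemma fabs_div_emb {γ : Kinf Fq} {N : Fq[X]} {n : ℕ} (hN : N.degree = n) :
    fabs Fq (γ / emb Fq N) = fabs Fq γ * qc Fq ^ (-(n : ℤ)) := by
  have hN0 : N ≠ 0 := by rintro rfl; simp at hN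
  rw [fabs_div, fabs_emb hN0, natDegree_eq_of_degree_eq_some hN, zpow_neg, div_eq_mul_inv]

lemma exists_degree_lt_fabs_sub_emb_le {γ : Kinf Fq} {n : ℕ} (hγ : fabs Fq γ < qc Fq ^ (n : ℤ)) :
    ∃ a : Fq[X], a.degree < n ∧ fabs Fq (γ - emb Fq a) ≤ qc Fq ^ (-1 : ℤ) := by
  rw [← neg_neg (n : ℤ), fabs_lt_zpow_iff, fabs_le_zpow_iff] at hγ
  let a : Fq[X] := ∑ j ∈ Finset.range n, monomial j (γ.coeff (-(j : ℤ)))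
  have ha : ∀ j : ℕ, a.coeff j = if j < n then γ.coeff (-(j : ℤ)) else 0 := by
    intro j
    simp [a, coeff_monomial]
  refine ⟨a, (degree_lt_iff_coeff_zero a n).mpr fun j hj => by simp [ha, hj], ?_⟩
  refine fabs_le_zpow_iff.mpr fun d hd => ?_
  rw [HahnSeries.coeff_sub, emb_coeff, if_pos (by omega), ha, sub_eq_zero]
  split_ifs with hdn
  · congr
    omega
  · exact hγ d (by omega)

end Embedding

section Norm

variable {Fq} {m : ℕ}

lemma vnorm_le_iff {v : Fin m → Kinf Fq} {r : NNReal} : vnorm Fq v ≤ r ↔ ∀ i, fabs Fq (v i) ≤ r :=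
  Finset.sup_le_iff.trans (by simp)

lemma fabs_le_vnorm (v : Fin m → Kinf Fq) (i : Fin m) : fabs Fq (v i) ≤ vnorm Fq v :=
  Finset.le_sup (f := fun i => fabs Fq (v i)) (Finset.mem_univ i)

lemma vnorm_lt_zpow_iff {v : Fin m → Kinf Fq} {j : ℤ} :
    vnorm Fq v < qc Fq ^ (-j) ↔ vnorm Fq v ≤ qc Fq ^ (-(j + 1)) := by
  refine ⟨fun h => vnorm_le_iff.mpr fun i => fabs_lt_zpow_iff.mp ((fabs_le_vnorm v i).trans_lt h),
    fun h => h.trans_lt ?_⟩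
  rw [zpow_lt_zpow_iff_right₀ (one_lt_qc Fq)]
  omega

lemma vnorm_sub_comm (v w : Fin m → Kinf Fq) : vnorm Fq (v - w) = vnorm Fq (w - v) := by
  simp only [vnorm, Pi.sub_apply, fabs_sub_comm (v _)]

lemma vnorm_sub_le_max (u v w : Fin m → Kinf Fq) :
    vnorm Fq (u - w) ≤ max (vnorm Fq (u - v)) (vnorm Fq (v - w)) :=
  vnorm_le_iff.mpr fun i => by
    simpa using (fabs_add_le ((u - v) i) ((v - w) i)).trans
      (max_le_max (fabs_le_vnorm _ i) (fabs_le_vnorm _ i))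

lemma mem_ball_comm {v w : Fin m → Kinf Fq} {r : NNReal} : v ∈ ball Fq w r ↔ w ∈ ball Fq v r := by
  simp only [ball, Set.mem_ofPred_eq, vnorm_sub_comm v]

lemma vnorm_sub_lt_of_mem_ball {n : ℕ} {α β r : Fin m → Kinf Fq}
    (h : α ∈ ball Fq β (qc Fq ^ (-((n : ℤ) + 1)))) (hβ : vnorm Fq (β - r) < qc Fq ^ (-(n : ℤ))) :
    vnorm Fq (α - r) < qc Fq ^ (-(n : ℤ)) := by
  rw [vnorm_lt_zpow_iff] at hβ ⊢
  exact (vnorm_sub_le_max α β r).trans (max_le (by rwa [vnorm_sub_comm]) hβ)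

lemma degMin_eq_of_mem_ball (S : Set Fq[X]) {n : ℕ} {α β : Fin m → Kinf Fq}
    (h : α ∈ ball Fq β (qc Fq ^ (-((n : ℤ) + 1)))) :
    degMin Fq S m n α = degMin Fq S m n β := by
  unfold degMin
  congr 1
  ext d
  refine exists₂_congr fun P Q => and_congr_right' <| and_congr_right' <| and_congr_right' <|
    and_congr_right' ⟨vnorm_sub_lt_of_mem_ball (mem_ball_comm.mp h), vnorm_sub_lt_of_mem_ball h⟩

end Norm

section Tiling

variable {Fq} {m n : ℕ} {N : Fq[X]}

lemma mem_mfrak_iff {β : Kinf Fq} : β ∈ mfrak Fq ↔ fabs Fq β ≤ qc Fq ^ (-1 : ℤ) := by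
  rw [zpow_neg_one]
  rfl

lemma exists_degree_lt_fabs_sub_div_le (hN : N.degree = n) {β : Kinf Fq} (hβ : β ∈ mfrak Fq) :
    ∃ a : Fq[X], a.degree < n ∧ fabs Fq (β - emb Fq a / emb Fq N) ≤ qc Fq ^ (-((n : ℤ) + 1)) := by
  have hN0 : N ≠ 0 := by rintro rfl; simp at hN
  have hβN : fabs Fq (β * emb Fq N) < qc Fq ^ (n : ℤ) := by
    rw [fabs_mul, fabs_emb hN0, natDegree_eq_of_degree_eq_some hN]
    exact mul_lt_of_lt_one_left (zpow_pos (qc_pos Fq) _)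
      (hβ.trans_lt (inv_lt_one_of_one_lt₀ (one_lt_qc Fq)))
  obtain ⟨a, ha, hsub⟩ := exists_degree_lt_fabs_sub_emb_le hβN
  refine ⟨a, ha, ?_⟩
  rw [← mul_div_cancel_right₀ β (emb_ne_zero hN0), ← sub_div, fabs_div_emb hN]
  calc _ ≤ qc Fq ^ (-1 : ℤ) * qc Fq ^ (-(n : ℤ)) := by gcongr
    _ = qc Fq ^ (-((n : ℤ) + 1)) := by rw [← zpow_add₀ (qc_ne_zero Fq)]; ring_nf

lemma le_fabs_div_sub_div (hN : N.degree = n) {a b : Fq[X]} (hab : a ≠ b) :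
    qc Fq ^ (-(n : ℤ)) ≤ fabs Fq (emb Fq a / emb Fq N - emb Fq b / emb Fq N) := by
  rw [div_sub_div_same, ← map_sub, fabs_div_emb hN]
  exact le_mul_of_one_le_left (zpow_pos (qc_pos Fq) _).le (one_le_fabs_emb (sub_ne_zero.mpr hab))

lemma div_mem_mfrak (hN : N.degree = n) {a : Fq[X]} (ha : a.degree < n) :
    emb Fq a / emb Fq N ∈ mfrak Fq := by
  have h := fabs_emb_lt_of_degree_lt (Fq := Fq) ha
  rw [← neg_neg (n : ℤ), fabs_lt_zpow_iff] at h
  rw [mem_mfrak_iff, fabs_div_emb hN]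
  calc _ ≤ qc Fq ^ (-(-(n : ℤ) + 1)) * qc Fq ^ (-(n : ℤ)) := by gcongr
    _ = qc Fq ^ (-1 : ℤ) := by rw [← zpow_add₀ (qc_ne_zero Fq)]; ring_nf

lemma mem_mfrak_of_fabs_sub_le {β γ : Kinf Fq} (hγ : γ ∈ mfrak Fq)
    (h : fabs Fq (β - γ) ≤ qc Fq ^ (-((n : ℤ) + 1))) : β ∈ mfrak Fq := by
  rw [mem_mfrak_iff] at hγ ⊢
  have hr : qc Fq ^ (-((n : ℤ) + 1)) ≤ qc Fq ^ (-1 : ℤ) := by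
    rw [zpow_le_zpow_iff_right₀ (one_lt_qc Fq)]
    omega
  simpa using (fabs_add_le (β - γ) γ).trans (max_le (h.trans hr) hγ)

lemma ball_subset_mfrakV (hN : N.degree = n) {a : Fin m → Fq[X]} (ha : a ∈ polyVecLT Fq m n) :
    ball Fq (ratV Fq a N) (qc Fq ^ (-((n : ℤ) + 1))) ⊆ mfrakV Fq m := fun _ hα i =>
  mem_mfrak_of_fabs_sub_le (div_mem_mfrak hN (ha i))
    (vnorm_le_iff.mp (mem_ball_comm.mp hα) i)

lemma exists_mem_ball (hN : N.degree = n) {α : Fin m → Kinf Fq} (hα : α ∈ mfrakV Fq m) :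
    ∃ a ∈ polyVecLT Fq m n, α ∈ ball Fq (ratV Fq a N) (qc Fq ^ (-((n : ℤ) + 1))) := by
  choose a ha hαa using fun i => exists_degree_lt_fabs_sub_div_le hN (hα i)
  exact ⟨a, ha, mem_ball_comm.mp (vnorm_le_iff.mpr hαa)⟩

lemma disjoint_ball (hN : N.degree = n) {a b : Fin m → Fq[X]} (hab : a ≠ b) :
    Disjoint (ball Fq (ratV Fq a N) (qc Fq ^ (-((n : ℤ) + 1))))
      (ball Fq (ratV Fq b N) (qc Fq ^ (-((n : ℤ) + 1)))) := by
  refine Set.disjoint_left.mpr fun α hαa hαb => ?_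
  obtain ⟨i, hi⟩ := Function.ne_iff.mp hab
  have hr : qc Fq ^ (-((n : ℤ) + 1)) < qc Fq ^ (-(n : ℤ)) := by
    rw [zpow_lt_zpow_iff_right₀ (one_lt_qc Fq)]
    omega
  have hle := vnorm_sub_le_max (ratV Fq a N) α (ratV Fq b N)
  rw [vnorm_sub_comm α] at hle
  exact (le_fabs_div_sub_div hN hi).not_gt <|
    ((fabs_le_vnorm _ i).trans (hle.trans (max_le hαa hαb))).trans_lt hr

lemma setOf_degMin_eq_biUnion (S : Set Fq[X]) (hN : N.degree = n) (k : ℕ) :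
    {α ∈ mfrakV Fq m | degMin Fq S m n α = k} =
      ⋃ a ∈ {a ∈ polyVecLT Fq m n | dN Fq S m N a = k},
        ball Fq (ratV Fq a N) (qc Fq ^ (-((n : ℤ) + 1))) := by
  have hdN : ∀ {a α}, α ∈ ball Fq (ratV Fq a N) (qc Fq ^ (-((n : ℤ) + 1))) →
      degMin Fq S m n α = dN Fq S m N a := fun hα => by
    rw [dN, natDegree_eq_of_degree_eq_some hN, degMin_eq_of_mem_ball S (mem_ball_comm.mp hα)]
  ext α
  simp only [Set.mem_iUnion, Set.mem_sep_iff, exists_prop]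
  constructor
  · rintro ⟨hα, rfl⟩
    obtain ⟨a, ha, hαa⟩ := exists_mem_ball hN hα
    exact ⟨a, ⟨ha, (hdN hαa).symm⟩, hαa⟩
  · rintro ⟨a, ⟨ha, rfl⟩, hαa⟩
    exact ⟨ball_subset_mfrakV hN ha hαa, hdN hαa⟩

end Tiling

section Measure

def mfrakPow (i : ℤ) : Set (Kinf Fq) := {β | fabs Fq β ≤ qc Fq ^ (-i)}

variable {Fq}

lemma mem_mfrakPow_iff {i : ℤ} {β : Kinf Fq} : β ∈ mfrakPow Fq i ↔ ∀ d < i, β.coeff d = 0 :=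
  fabs_le_zpow_iff

lemma isOpen_mfrakPow (i : ℤ) : IsOpen (mfrakPow Fq i) := by
  have hset : mfrakPow Fq i = {β : Kinf Fq | Valued.v.restrict β ≤
      Valued.v.restrict (HahnSeries.single i (1 : Fq) : Kinf Fq)} := by
    ext β
    rw [Set.mem_ofPred_eq, mem_mfrakPow_iff, Valuation.restrict_le_iff,
      LaurentSeries.valuation_single_zpow, ← LaurentSeries.valuation_le_iff_coeff_lt_eq_zero Fq]
  rw [hset]
  refine Valued.isOpen_closedBall _ ?_
  rw [ne_eq, Valuation.restrict_eq_zero_iff, Valuation.zero_iff]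
  exact HahnSeries.single_ne_zero one_ne_zero

lemma mfrakPow_eq_iUnion (i : ℤ) :
    mfrakPow Fq i = ⋃ c : Fq, (HahnSeries.single i c + ·) ⁻¹' mfrakPow Fq (i + 1) := by
  ext β
  simp only [Set.mem_iUnion, Set.mem_preimage, mem_mfrakPow_iff, HahnSeries.coeff_add,
    HahnSeries.coeff_single]
  refine ⟨fun hβ => ⟨-β.coeff i, fun d hd => ?_⟩, fun ⟨c, hc⟩ d hd => ?_⟩
  · rcases eq_or_ne d i with rfl | hne
    · simp
    · simp [hne, hβ d (by omega)]
  · simpa [show d ≠ i by omega] using hc d (by omega)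

lemma pairwise_disjoint_preimage_mfrakPow (i : ℤ) : Pairwise (Function.onFun Disjoint
    fun c : Fq => (HahnSeries.single i c + ·) ⁻¹' mfrakPow Fq (i + 1)) := by
  intro c c' hcc'
  refine Set.disjoint_left.mpr fun β hc hc' => hcc' ?_
  simpa using (mem_mfrakPow_iff.mp hc i (by omega)).trans (mem_mfrakPow_iff.mp hc' i (by omega)).symm

variable [MeasurableSpace (Kinf Fq)] [BorelSpace (Kinf Fq)]

lemma measure_mfrakPow_eq_card_mul (ν : Measure (Kinf Fq)) [ν.IsAddLeftInvariant] (i : ℤ) :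
    ν (mfrakPow Fq i) = Fintype.card Fq * ν (mfrakPow Fq (i + 1)) := by
  rw [mfrakPow_eq_iUnion i, measure_iUnion (pairwise_disjoint_preimage_mfrakPow i)
    fun c => (isOpen_mfrakPow _).measurableSet.preimage (measurable_const_add _)]
  simp [measure_preimage_add]

lemma measure_mfrakPow {ν : Measure (Kinf Fq)} [ν.IsAddLeftInvariant] (hν : ν (mfrak Fq) = 1)
    (j : ℕ) : ν (mfrakPow Fq (j + 1)) = (Fintype.card Fq : ℝ≥0∞)⁻¹ ^ j := by
  induction j with
  | zero => simpa [mfrakPow, mfrak, zpow_neg_one] using hν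
  | succ j ih =>
    rw [pow_succ', ← ih, measure_mfrakPow_eq_card_mul ν ((j : ℤ) + 1), ENNReal.inv_mul_cancel_left
      (Nat.cast_ne_zero.mpr Fintype.card_ne_zero) (ENNReal.natCast_ne_top _)]
    push_cast
    ring_nf

lemma ball_eq_pi {m : ℕ} (c : Fin m → Kinf Fq) (i : ℤ) :
    ball Fq c (qc Fq ^ (-i)) = Set.univ.pi fun k => (-c k + ·) ⁻¹' mfrakPow Fq i := by
  ext α
  simp only [ball, Set.mem_ofPred_eq, vnorm_le_iff, Set.mem_univ_pi, Set.mem_preimage, mfrakPow,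
    Pi.sub_apply, neg_add_eq_sub, fabs_sub_comm (c _)]

lemma measurableSet_ball_zpow {m : ℕ} (c : Fin m → Kinf Fq) (i : ℤ) :
    MeasurableSet (ball Fq c (qc Fq ^ (-i))) := by
  rw [ball_eq_pi]
  exact .univ_pi fun k => (isOpen_mfrakPow i).measurableSet.preimage (measurable_const_add _)

lemma measure_pi_ball {ν : Measure (Kinf Fq)} [SigmaFinite ν] [ν.IsAddLeftInvariant]
    (hν : ν (mfrak Fq) = 1) {m : ℕ} (c : Fin m → Kinf Fq) (j : ℕ) :
    Measure.pi (fun _ => ν) (ball Fq c (qc Fq ^ (-((j : ℤ) + 1)))) =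
      ((Fintype.card Fq : ℝ≥0∞)⁻¹ ^ j) ^ m := by
  rw [ball_eq_pi, Measure.pi_pi]
  simp [measure_preimage_add, measure_mfrakPow hν]

end Measure

lemma finite_polyVecLT (m n : ℕ) : (polyVecLT Fq m n).Finite := by
  have : Finite (degreeLT Fq n) := .of_equiv _ (degreeLTEquiv Fq n).toEquiv.symm
  exact Set.Finite.pi' (t := fun _ => {p : Fq[X] | p.degree < n}) fun _ =>
    (degreeLT Fq n : Set Fq[X]).toFinite.subset fun _ => mem_degreeLT.mpr

theorem stmt0 (S : Set (Polynomial Fq))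
    [MeasurableSpace (Kinf Fq)] [BorelSpace (Kinf Fq)]
    (ν : Measure (Kinf Fq)) [SigmaFinite ν] [ν.IsAddLeftInvariant]
    (hν : ν (mfrak Fq) = 1)
    (m n : ℕ) (N : Polynomial Fq) (hN : N.degree = (n : WithBot ℕ))
    (k : ℕ) :
    (Set.ncard {a ∈ polyVecLT Fq m n | dN Fq S m N a = k} : ℝ≥0∞)
        / (Fintype.card Fq : ℝ≥0∞) ^ (m * n)
      = Measure.pi (fun _ : Fin m => ν)
          {α ∈ mfrakV Fq m | degMin Fq S m n α = k} := by
  have hA := (finite_polyVecLT Fq m n).subset (Set.sep_subset _ fun a => dN Fq S m N a = k)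
  rw [setOf_degMin_eq_biUnion S hN, ← hA.coe_toFinset, Finset.set_biUnion_coe,
    measure_biUnion_finset (fun a _ b _ hab => disjoint_ball hN hab)
      fun a _ => measurableSet_ball_zpow _ _,
    Finset.sum_congr rfl fun a _ => measure_pi_ball hν _ n, Finset.sum_const, nsmul_eq_mul,
    Set.ncard_coe_finset, div_eq_mul_inv, ENNReal.inv_pow, ← pow_mul, mul_comm n m]
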